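/- arXiv:1604.03464 — 3 statements merged into one kernel-verified Lean document; each statement's English description precedes it below -/
import Mathlib

section
/- If x is a nonzero polynomial in ℂ[t] and y is any polynomial in ℂ[t], then the polynomial (t+1)·x² + t²·y² is not constant. -/
/-! The first summand has odd degree and the second, being the square of `X * y`, has even
degree, so their leading terms cannot cancel and the sum has positive degree. -/

open Polynomial

namespace Polynomial

variable {R : Type*} [Semiring R]

theorem natDegree_le_natDegree_add_of_odd_of_even {p q : R[X]} (hp : Odd p.natDegree)
    (hq : Even q.natDegree) : p.natDegree ≤ (p + q).natDegree :=
  not_lt.1 fun h => Nat.not_even_iff_odd.2 hp (natDegree_eq_of_natDegree_add_lt_left p q h ▸ hq)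

variable [NoZeroDivisors R]

theorem even_natDegree_sq (q : R[X]) : Even (q ^ 2).natDegree := by
  rw [natDegree_pow]
  exact even_two_mul _

theorem odd_natDegree_mul_sq {p x : R[X]} (hp : Odd p.natDegree) (hx : x ≠ 0) :
    Odd (p * x ^ 2).natDegree := by
  rw [natDegree_mul (ne_zero_of_natDegree_gt hp.pos) (pow_ne_zero 2 hx), natDegree_pow]
  exact hp.add_even (even_two_mul _)

end Polynomial

theorem stmt_3 (x y : Polynomial ℂ) (hx : x ≠ 0) :
    ¬ ∃ c : ℂ, (X + 1) * x ^ 2 + X ^ 2 * y ^ 2 = C c := by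
  rintro ⟨c, hc⟩
  have hodd : Odd ((X + 1) * x ^ 2).natDegree :=
    odd_natDegree_mul_sq (by rw [← C_1, natDegree_X_add_C]; exact odd_one) hx
  have hle := natDegree_le_natDegree_add_of_odd_of_even hodd (even_natDegree_sq (X * y))
  rw [mul_pow, hc, natDegree_C] at hle
  exact hodd.pos.ne' (Nat.le_zero.1 hle)
end

section
/- Let M ⊆ ℂ(t)* be the subgroup of rational functions of the form c·∏ᵢ (t - eᵢ)^{nᵢ} with c ∈ ℂ* and nᵢ ∈ ℤ, where e₁,…,eₙ ∈ ℂ are fixed distinct points. Let a, b ∈ ℂ be distinct and distinct from all eᵢ. Then the image of M under the map f ↦ (f(a), f(b)) ∈ ℂ* × ℂ* is not all of ℂ* × ℂ*. -/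
/-!
Dividing the two evaluations of `c ∏ (t - eᵢ)^{nᵢ}` cancels `c`, so if every pair `(1, v)` were
attained, every `v ∈ ℂ*` would be a product `∏ ((b - eᵢ)/(a - eᵢ))^{nᵢ}`. There are only countably
many exponent vectors in `ℤⁿ`, while `ℂ*` is uncountable.
-/

theorem not_forall_exists_prod_zpow_eq {K ι : Type*} [Field K] [Uncountable K] [Fintype ι]
    (x : ι → K) : ¬ ∀ v : Kˣ, ∃ m : ι → ℤ, ∏ i, x i ^ m i = v := by
  intro h
  have hunits : {0}ᶜ ⊆ Set.range fun m : ι → ℤ => ∏ i, x i ^ m i := fun z hz =>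
    h (Units.mk0 z hz)
  have hcount : ({0} ∪ {0}ᶜ : Set K).Countable :=
    (Set.countable_singleton 0).union ((Set.countable_range _).mono hunits)
  rw [Set.union_compl_self, Set.countable_univ_iff] at hcount
  exact not_countable hcount

theorem stmt_6_general (n : ℕ) (e : Fin n → ℂ) (a b : ℂ) :
    ¬ ∀ u v : ℂˣ, ∃ (c : ℂˣ) (m : Fin n → ℤ),
        (c : ℂ) * ∏ i, (a - e i) ^ (m i) = (u : ℂ) ∧
        (c : ℂ) * ∏ i, (b - e i) ^ (m i) = (v : ℂ) := by
  intro h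
  have : Uncountable ℂ := Complex.ofReal_injective.uncountable
  refine not_forall_exists_prod_zpow_eq (fun i => (b - e i) / (a - e i)) fun v => ?_
  obtain ⟨c, m, hu, hv⟩ := h 1 v
  refine ⟨m, ?_⟩
  calc ∏ i, ((b - e i) / (a - e i)) ^ m i
      = ((c : ℂ) * ∏ i, (b - e i) ^ m i) / ((c : ℂ) * ∏ i, (a - e i) ^ m i) := by
        rw [mul_div_mul_left _ _ c.ne_zero, ← Finset.prod_div_distrib]
        simp only [div_zpow]
    _ = v := by rw [hu, hv, Units.val_one, div_one]

/-- The image of the group `M = {c ∏ (t - eᵢ)^{nᵢ}}` under simultaneous evaluation at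
two points `a, b` distinct from the `eᵢ` is not all of `ℂ* × ℂ*`. -/
theorem stmt_6 (n : ℕ) (e : Fin n → ℂ) (he : Function.Injective e)
    (a b : ℂ) (hab : a ≠ b) (ha : ∀ i, a ≠ e i) (hb : ∀ i, b ≠ e i) :
    ¬ ∀ u v : ℂˣ, ∃ (c : ℂˣ) (m : Fin n → ℤ),
        (c : ℂ) * ∏ i, (a - e i) ^ (m i) = (u : ℂ) ∧
        (c : ℂ) * ∏ i, (b - e i) ^ (m i) = (v : ℂ) :=
  stmt_6_general n e a b
end

section
/- Over the field K = ℂ(t), every nondegenerate quadratic form in n ≥ 3 variables is isotropic, and consequently for every b ∈ K* the equation q(x₁,…,xₙ) = b has a solution in K. -/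
/-!
Over `k(t)` with `k` algebraically closed, `a x² + b y² = z²` has a nontrivial solution for all
`a, b ≠ 0` (Legendre's descent). Scaling by squares makes `a`, `b` squarefree polynomials with
`deg a ≤ deg b`, and a constant `a` is a square. Otherwise `b` has simple roots, so interpolating
square roots of `a` at them gives `c` with `deg c < deg b` and `c² ≡ a mod b`; then
`c² - a = b d² b₁` with `deg b₁ < deg b`, and multiplicativity of the norm form `z² - a x²`
reduces the pair `(a, b)` to `(a, b₁)`.

A nondegenerate form in at least three variables diagonalises and so contains such a ternary
form, hence is isotropic; an isotropic nondegenerate form is universal, because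
`Q (s • v + u) = Q u + s * polar Q v u` when `Q v = 0`.
-/

open Polynomial

section TernaryIsotropic

variable {F : Type*} [Field F]

/-- The ternary form `⟨a, b, -1⟩` is isotropic, i.e. the Hilbert symbol `(a, b)` is trivial. -/
def TernaryIsotropic (a b : F) : Prop :=
  ∃ x y z : F, (x, y, z) ≠ 0 ∧ a * x ^ 2 + b * y ^ 2 = z ^ 2

theorem TernaryIsotropic.symm {a b : F} (h : TernaryIsotropic a b) : TernaryIsotropic b a := by
  obtain ⟨x, y, z, hne, hxyz⟩ := h
  refine ⟨y, x, z, ?_, by linear_combination hxyz⟩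
  contrapose! hne
  simp_all [Prod.ext_iff]

theorem TernaryIsotropic.of_isSquare_left {a : F} (ha : IsSquare a) (b : F) :
    TernaryIsotropic a b := by
  obtain ⟨r, rfl⟩ := ha
  exact ⟨1, 0, r, by simp [Prod.ext_iff], by ring⟩

theorem TernaryIsotropic.mul_sq {a b : F} (h : TernaryIsotropic a b) {u v : F} (hu : u ≠ 0)
    (hv : v ≠ 0) : TernaryIsotropic (a * u ^ 2) (b * v ^ 2) := by
  obtain ⟨x, y, z, hne, hxyz⟩ := h
  refine ⟨x / u, y / v, z, ?_, ?_⟩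
  · contrapose! hne
    simp_all [Prod.ext_iff]
  · field_simp
    linear_combination hxyz

theorem TernaryIsotropic.of_sq_sub_eq {a b b₁ c d : F} (h : TernaryIsotropic a b₁)
    (ha : ¬IsSquare a) (hb₁ : b₁ ≠ 0) (hd : d ≠ 0) (hc : c ^ 2 - a = b * (d ^ 2 * b₁)) :
    TernaryIsotropic a b := by
  obtain ⟨x, y, z, hne, hxyz⟩ := h
  have hy : y ≠ 0 := by
    rintro rfl
    have hx : x ≠ 0 := by
      rintro rfl
      exact hne (by simpa [eq_comm (a := (0 : F))] using hxyz)
    rw [sq (0 : F), mul_zero, mul_zero, add_zero] at hxyz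
    exact ha ⟨z / x, by rw [← sq, div_pow, ← hxyz]; field_simp⟩
  -- `(c + √a) (z + x √a) = (c z + a x) + (c x + z) √a`, and norms multiply.
  refine ⟨c * x + z, b₁ * d * y, c * z + a * x, by simp [Prod.ext_iff, *], ?_⟩
  linear_combination -(b₁ * y ^ 2) * hc + (c ^ 2 - a) * hxyz

theorem TernaryIsotropic.exists_diag_eq_zero {a b c : F} (hc : c ≠ 0)
    (h : TernaryIsotropic (-a / c) (-b / c)) :
    ∃ x y z : F, (x, y, z) ≠ 0 ∧ a * x ^ 2 + b * y ^ 2 + c * z ^ 2 = 0 := by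
  obtain ⟨x, y, z, hne, hxyz⟩ := h
  refine ⟨x, y, z, hne, ?_⟩
  field_simp at hxyz
  linear_combination -hxyz

end TernaryIsotropic

theorem exists_sq_mul_squarefree {R : Type*} [CommMonoidWithZero R] [IsCancelMulZero R]
    [WfDvdMonoid R] {x : R} (hx : x ≠ 0) : ∃ a b : R, x = a ^ 2 * b ∧ Squarefree b := by
  induction x using (wellFounded_dvdNotUnit (α := R)).induction with
  | h x ih =>
  by_cases hsq : Squarefree x
  · exact ⟨1, x, by simp, hsq⟩
  obtain ⟨p, ⟨y, rfl⟩, hp⟩ : ∃ p, p * p ∣ x ∧ ¬IsUnit p := by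
    simpa [Squarefree] using hsq
  have hy : y ≠ 0 := right_ne_zero_of_mul hx
  obtain ⟨a, b, rfl, hb⟩ :=
    ih y ⟨hy, p * p, fun h => hp (isUnit_of_mul_isUnit_left h), mul_comm _ y⟩ hy
  exact ⟨p * a, b, by rw [mul_pow, ← sq, mul_assoc], hb⟩

section FractionRing

variable {R K : Type*} [CommRing R] [Field K] [Algebra R K] [IsFractionRing R K]

theorem not_isSquare_algebraMap_of_squarefree [IsIntegrallyClosed R] {a : R} (ha : Squarefree a)
    (hu : ¬IsUnit a) : ¬IsSquare (algebraMap R K a) := by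
  rintro ⟨x, hx⟩
  obtain ⟨y, rfl⟩ :=
    IsIntegrallyClosed.exists_algebraMap_eq_of_isIntegral_pow (R := R) (x := x) two_pos
      (by rw [sq, ← hx]; exact isIntegral_algebraMap)
  rw [← map_mul, (IsFractionRing.injective R K).eq_iff] at hx
  have hy : IsUnit y := ha y (hx ▸ dvd_rfl)
  exact hu (hx ▸ hy.mul hy)

theorem exists_eq_algebraMap_squarefree_mul_sq [IsDomain R] [WfDvdMonoid R] {u : K}
    (hu : u ≠ 0) :
    ∃ (s : R) (w : K), Squarefree s ∧ w ≠ 0 ∧ u = algebraMap R K s * w ^ 2 := by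
  obtain ⟨n, d, hd, rfl⟩ := IsFractionRing.div_surjective (A := R) u
  have hd0 : algebraMap R K d ≠ 0 := IsFractionRing.to_map_ne_zero_of_mem_nonZeroDivisors hd
  have hn0 : n ≠ 0 := by rintro rfl; simp at hu
  obtain ⟨h, s, hnd, hs⟩ :=
    exists_sq_mul_squarefree (mul_ne_zero hn0 (nonZeroDivisors.ne_zero hd))
  have hh : algebraMap R K h ≠ 0 := (map_ne_zero_iff _ (IsFractionRing.injective R K)).mpr
    (by rintro rfl; simp_all [nonZeroDivisors.ne_zero hd])
  refine ⟨s, algebraMap R K h / algebraMap R K d, hs, div_ne_zero hh hd0, ?_⟩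
  have := congrArg (algebraMap R K) hnd
  simp only [map_mul, map_pow] at this
  field_simp
  linear_combination this

end FractionRing

theorem Polynomial.exists_degree_lt_dvd_sq_sub {k : Type*} [Field k] [IsAlgClosed k] {b : k[X]}
    (hb : Squarefree b) (a : k[X]) : ∃ c : k[X], c.degree < b.degree ∧ b ∣ c ^ 2 - a := by
  classical
  have hnodup : b.roots.Nodup := nodup_roots (PerfectField.separable_iff_squarefree.mpr hb)
  choose f hf using fun r : k => IsAlgClosed.exists_pow_nat_eq (a.eval r) two_pos
  set c := Lagrange.interpolate b.roots.toFinset id f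
  refine ⟨c, ?_, ?_⟩
  · calc c.degree < b.roots.toFinset.card := Lagrange.degree_interpolate_lt _ (Set.injOn_id _)
      _ = b.degree := by
        rw [Multiset.toFinset_card_of_nodup hnodup, IsAlgClosed.card_roots_eq_natDegree,
          degree_eq_natDegree hb.ne_zero]
  rcases eq_or_ne (c ^ 2 - a) 0 with h0 | h0
  · simp [h0]
  refine (IsAlgClosed.splits b).dvd_of_roots_le_roots hb.ne_zero
    ((Multiset.le_iff_subset hnodup).mpr fun r hr => ?_)
  have hc : c.eval r = f r :=
    Lagrange.eval_interpolate_at_node f (Set.injOn_id _) (Multiset.mem_toFinset.mpr hr)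
  rw [mem_roots h0, IsRoot.def, eval_sub, eval_pow, hc, hf, sub_self]

namespace RatFunc

variable {k : Type*} [Field k] [IsAlgClosed k]

theorem ternaryIsotropic_algebraMap_of_squarefree {a b : k[X]} (ha : Squarefree a)
    (hb : Squarefree b) :
    TernaryIsotropic (algebraMap k[X] (RatFunc k) a) (algebraMap k[X] (RatFunc k) b) := by
  induction hN : a.natDegree + b.natDegree using Nat.strong_induction_on generalizing a b with
  | _ N ih =>
  wlog hab : a.natDegree ≤ b.natDegree generalizing a b
  · exact (this hb ha (by omega) (by omega)).symm
  rcases Nat.eq_zero_or_pos a.natDegree with ha0 | ha0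
  · obtain ⟨r, rfl⟩ := natDegree_eq_zero.mp ha0
    obtain ⟨s, rfl⟩ := IsAlgClosed.exists_eq_mul_self r
    rw [C_mul]
    exact .of_isSquare_left ((IsSquare.mul_self _).map _) _
  have hsq : ¬IsSquare (algebraMap k[X] (RatFunc k) a) :=
    not_isSquare_algebraMap_of_squarefree ha fun hu => by
      simp [natDegree_eq_zero_of_isUnit hu] at ha0
  obtain ⟨c, hcb, m, hm⟩ := exists_degree_lt_dvd_sq_sub hb a
  have hm0 : m ≠ 0 := by
    rintro rfl
    refine hsq ⟨algebraMap _ _ c, ?_⟩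
    rw [← sub_eq_zero.mp (hm.trans (mul_zero b)), map_pow, sq]
  have hc : c.natDegree < b.natDegree := by
    rcases eq_or_ne c 0 with rfl | hc0
    · rw [natDegree_zero]; omega
    · exact natDegree_lt_natDegree hc0 hcb
  have hmb : m.natDegree < b.natDegree := by
    have := natDegree_sub_le (c ^ 2) a
    rw [natDegree_pow, hm, natDegree_mul hb.ne_zero hm0] at this
    omega
  obtain ⟨d, b₁, rfl, hb₁⟩ := exists_sq_mul_squarefree hm0
  have hb₁m : b₁.natDegree ≤ (d ^ 2 * b₁).natDegree :=
    natDegree_le_of_dvd (dvd_mul_left _ _) hm0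
  have hd : d ≠ 0 := (pow_ne_zero_iff two_ne_zero).mp (left_ne_zero_of_mul hm0)
  refine (ih _ (by omega) ha hb₁ rfl).of_sq_sub_eq hsq (algebraMap_ne_zero hb₁.ne_zero)
    (algebraMap_ne_zero hd) (c := algebraMap _ _ c) ?_
  simpa using congrArg (algebraMap k[X] (RatFunc k)) hm

theorem ternaryIsotropic {a b : RatFunc k} (ha : a ≠ 0) (hb : b ≠ 0) :
    TernaryIsotropic a b := by
  obtain ⟨s, u, hs, hu, rfl⟩ := exists_eq_algebraMap_squarefree_mul_sq (R := k[X]) ha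
  obtain ⟨t, v, ht, hv, rfl⟩ := exists_eq_algebraMap_squarefree_mul_sq (R := k[X]) hb
  exact (ternaryIsotropic_algebraMap_of_squarefree hs ht).mul_sq hu hv

end RatFunc

open QuadraticMap

namespace QuadraticForm

variable {K V : Type*} [Field K] [AddCommGroup V] [Module K V]

theorem surjective_of_not_anisotropic {Q : QuadraticForm K V}
    (hQ : (polarBilin Q).SeparatingLeft) (hiso : ¬Q.Anisotropic) : Function.Surjective Q := by
  obtain ⟨v, hv0, hv⟩ := (not_anisotropic_iff_exists Q).mp hiso
  obtain ⟨u, hu⟩ : ∃ u, polar Q v u ≠ 0 := by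
    by_contra! h
    exact hv0 (hQ v h)
  intro b
  set s := (b - Q u) / polar Q v u
  refine ⟨s • v + u, ?_⟩
  have h : Q (s • v + u) = Q (s • v) + Q u + polar Q (s • v) u := by rw [polar]; ring
  rw [h, QuadraticMap.map_smul, hv, polar_smul_left, smul_eq_mul, smul_eq_mul,
    div_mul_cancel₀ _ hu]
  ring

theorem not_anisotropic_weightedSumSquares
    (hK : ∀ a b : K, a ≠ 0 → b ≠ 0 → TernaryIsotropic a b) {m : ℕ} (hm : 3 ≤ m)
    (w : Fin m → Kˣ) : ¬(weightedSumSquares K w).Anisotropic := by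
  obtain ⟨n, rfl⟩ : ∃ n, m = n + 3 := ⟨m - 3, by omega⟩
  have hw : ∀ i, (w i : K) ≠ 0 := fun i => (w i).ne_zero
  obtain ⟨x, y, z, hne, hxyz⟩ := TernaryIsotropic.exists_diag_eq_zero (hw 2)
    (hK _ _ (div_ne_zero (neg_ne_zero.mpr (hw 0)) (hw 2))
      (div_ne_zero (neg_ne_zero.mpr (hw 1)) (hw 2)))
  intro h
  have hv := h (Fin.cons x (Fin.cons y (Fin.cons z 0))) (by
    simp only [weightedSumSquares_apply, Units.smul_def, smul_eq_mul, Fin.sum_univ_succ,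
      Fin.cons_zero, Fin.cons_succ, Fin.succ_zero_eq_one, Fin.succ_one_eq_two, Pi.zero_apply,
      mul_zero, Finset.sum_const_zero, add_zero]
    linear_combination hxyz)
  exact hne (by simpa [Prod.ext_iff, funext_iff, Fin.forall_fin_succ] using hv)

theorem not_anisotropic_of_ternaryIsotropic [Invertible (2 : K)] [FiniteDimensional K V]
    (hK : ∀ a b : K, a ≠ 0 → b ≠ 0 → TernaryIsotropic a b) {Q : QuadraticForm K V}
    (hQ : (polarBilin Q).SeparatingLeft) (hV : 3 ≤ Module.finrank K V) : ¬Q.Anisotropic := by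
  have hQ' : (associated Q).SeparatingLeft := fun x hx => hQ x fun y => by
    rw [← two_nsmul_associated K, LinearMap.smul_apply, LinearMap.smul_apply, hx y, smul_zero]
  obtain ⟨w, ⟨e⟩⟩ := Q.equivalent_weightedSumSquares_units_of_nondegenerate' hQ'
  refine fun hQa => not_anisotropic_weightedSumSquares hK hV w fun x hx => ?_
  have := hQa _ ((e.symm.map_app x).trans hx)
  exact e.symm.toLinearEquiv.map_eq_zero_iff.mp this

end QuadraticForm

/-- Over `K = ℂ(t)`, every nondegenerate quadratic form in `n ≥ 3` variables is
isotropic, and consequently represents every nonzero element of `K`. -/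
theorem stmt_15 (n : ℕ) (hn : 3 ≤ n)
    (q : QuadraticForm (RatFunc ℂ) (Fin n → RatFunc ℂ))
    (hq : (QuadraticMap.polarBilin q).Nondegenerate) :
    (∃ v : Fin n → RatFunc ℂ, v ≠ 0 ∧ q v = 0) ∧
    ∀ b : RatFunc ℂ, b ≠ 0 → ∃ x : Fin n → RatFunc ℂ, q x = b := by
  have : Invertible (2 : RatFunc ℂ) := invertibleOfNonzero two_ne_zero
  have hiso : ¬q.Anisotropic :=
    q.not_anisotropic_of_ternaryIsotropic (fun _ _ => RatFunc.ternaryIsotropic) hq.1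
      (by rwa [Module.finrank_fin_fun])
  exact ⟨(q.not_anisotropic_iff_exists).mp hiso,
    fun b _ => q.surjective_of_not_anisotropic hq.1 hiso b⟩
end
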